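/- Let A be an MV-algebra satisfying the identity 2x² = (2x)². If x ∈ A satisfies x ≤ ¬x, then nx ≤ ¬x for every natural number n. Hence the radical of A equals {x ∈ A : x ≤ ¬x}. -/

import Mathlib

/-!
Chang's identity gives `(2x)² = 2x² = 0` whenever `x² = 0`, and `x ≤ ¬x` is the same as `x² = 0`;
so `2ʲx ≤ ¬(2ʲx) ≤ ¬x` for all `j`, and `nx ≤ 2ⁿx`.

Such an `x` lies in every maximal ideal `M`: otherwise the ideal generated by `M` and `x` is
everything, so `¬(nx) ∈ M` for some `n`, and `x ≤ ¬(nx)`. Conversely, if `x² ≠ 0` then the ideal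
generated by `¬(2x)` is proper, because `x² ⊙ 2x = x²` forces `x² ⊙ (2x)ᵏ = x² ≠ 0`; a maximal
ideal containing it cannot contain `x`, since it would then contain `2x ⊕ ¬(2x) = 1`.
-/


/-- An MV-algebra `(A, ⊕, ¬, 0)`. -/
class MV (A : Type*) where
  op : A → A → A
  neg : A → A
  zero : A
  op_assoc : ∀ x y z : A, op (op x y) z = op x (op y z)
  op_comm : ∀ x y : A, op x y = op y x
  op_zero : ∀ x : A, op x zero = x
  neg_neg : ∀ x : A, neg (neg x) = x
  op_neg_zero : ∀ x : A, op x (neg zero) = neg zero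
  mv6 : ∀ x y : A, op (neg (op (neg x) y)) y = op (neg (op (neg y) x)) x

namespace MV

variable {A : Type*} [MV A]

/-- `1 := ¬0`. -/
def one : A := neg zero

/-- `x ⊙ y := ¬(¬x ⊕ ¬y)`. -/
def odot (x y : A) : A := neg (op (neg x) (neg y))

/-- `sup(x,y) := (x ⊙ ¬y) ⊕ y`. -/
def ssup (x y : A) : A := op (odot x (neg y)) y

/-- `inf(x,y) := (x ⊕ ¬y) ⊙ y`. -/
def sinf (x y : A) : A := odot (op x (neg y)) y

/-- `x ≤ y` iff `¬x ⊕ y = 1`. -/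
def le (x y : A) : Prop := op (neg x) y = one

/-- `x ≤ y` iff `inf(x,y) = x`. -/
def leInf (x y : A) : Prop := sinf x y = x

/-- `n`-fold sum `nx = x ⊕ ⋯ ⊕ x`. -/
def nsm : ℕ → A → A
  | 0, _ => zero
  | n + 1, x => op x (nsm n x)

/-- `x² := x ⊙ x`. -/
def sq (x : A) : A := odot x x

end MV

namespace MV

variable {A : Type*} [MV A]

/-- An ideal of an MV-algebra: contains `0`, downward closed, closed under `⊕`. -/
def IsIdeal (I : Set A) : Prop :=
  (zero : A) ∈ I ∧ (∀ x ∈ I, ∀ y : A, leInf y x → y ∈ I) ∧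
    (∀ x ∈ I, ∀ y ∈ I, op x y ∈ I)

/-- A maximal ideal: a proper ideal maximal among proper ideals. -/
def IsMaximalIdeal (I : Set A) : Prop :=
  IsIdeal I ∧ I ≠ Set.univ ∧ ∀ J : Set A, IsIdeal J → J ≠ Set.univ → I ⊆ J → J = I

/-- The radical: intersection of all maximal ideals. -/
def rad (A : Type*) [MV A] : Set A := ⋂₀ {I : Set A | IsMaximalIdeal I}

end MV

namespace MV

variable {A : Type*} [MV A]

instance : Std.Associative (α := A) op := ⟨op_assoc⟩
instance : Std.Commutative (α := A) op := ⟨op_comm⟩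

lemma zero_op (x : A) : op zero x = x := by rw [op_comm, op_zero]

lemma neg_one : neg (one : A) = zero := neg_neg zero

lemma op_one (x : A) : op x one = one := op_neg_zero x

lemma one_op (x : A) : op one x = one := by rw [op_comm, op_one]

lemma neg_op_self (x : A) : op (neg x) x = one := by
  simpa only [neg_one, zero_op, op_one] using mv6 (one : A) x

lemma op_neg_self (x : A) : op x (neg x) = one := by rw [op_comm, neg_op_self]

lemma neg_odot (a b : A) : neg (odot a b) = op (neg a) (neg b) := neg_neg _

lemma odot_comm (a b : A) : odot a b = odot b a := by rw [odot, op_comm, ← odot]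

lemma odot_assoc (a b c : A) : odot (odot a b) c = odot a (odot b c) := by
  simp only [odot, neg_neg, op_assoc]

lemma odot_zero (a : A) : odot a zero = zero := by
  rw [odot, ← one, op_one, neg_one]

lemma odot_one (a : A) : odot a one = a := by
  rw [odot, neg_one, op_zero, neg_neg]

lemma odot_neg_self (a : A) : odot a (neg a) = zero := by
  rw [odot, neg_neg, neg_op_self, neg_one]

lemma le_iff_odot_neg_eq_zero {a b : A} : le a b ↔ odot a (neg b) = zero := by
  rw [le, odot, neg_neg, ← neg_one]
  exact ⟨congrArg neg, fun h => by simpa only [neg_neg] using congrArg neg h⟩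

lemma le_one (a : A) : le a one := op_one (neg a)

lemma zero_le (a : A) : le zero a := one_op a

lemma le_op_left (a b : A) : le a (op a b) := by
  rw [le, ← op_assoc, neg_op_self, one_op]

lemma odot_le_left (a b : A) : le (odot a b) a := by
  rw [le, neg_odot, op_comm (neg a), op_assoc, neg_op_self, op_one]

lemma odot_le_right (a b : A) : le (odot a b) b := by
  rw [odot_comm]; exact odot_le_left b a

lemma ssup_comm (a b : A) : ssup a b = ssup b a := by
  simpa only [ssup, odot, neg_neg] using mv6 a b

lemma ssup_eq_of_le {a b : A} (h : le a b) : ssup a b = b := by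
  rw [ssup, odot, neg_neg, h, neg_one, zero_op]

lemma exists_op_eq_of_le {a b : A} (h : le a b) : ∃ p, op p a = b :=
  ⟨odot b (neg a), by rw [← ssup, ssup_comm, ssup_eq_of_le h]⟩

lemma le.refl (a : A) : le a a := neg_op_self a

lemma le.trans {a b c : A} (h₁ : le a b) (h₂ : le b c) : le a c := by
  obtain ⟨p, rfl⟩ := exists_op_eq_of_le h₁
  obtain ⟨q, rfl⟩ := exists_op_eq_of_le h₂
  rw [le, show op (neg a) (op q (op p a)) = op q (op p (op (neg a) a)) by ac_rfl,
    neg_op_self, op_one, op_one]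

lemma le.antisymm {a b : A} (h₁ : le a b) (h₂ : le b a) : a = b := by
  calc a = ssup b a := (ssup_eq_of_le h₂).symm
    _ = ssup a b := ssup_comm b a
    _ = b := ssup_eq_of_le h₁

lemma eq_zero_of_le_zero {a : A} (h : le a zero) : a = zero := h.antisymm (zero_le a)

lemma op_le_op_right {a b : A} (h : le a b) (c : A) : le (op a c) (op b c) := by
  obtain ⟨p, rfl⟩ := exists_op_eq_of_le h
  rw [le, show op (neg (op a c)) (op (op p a) c) = op p (op (neg (op a c)) (op a c)) by ac_rfl,
    neg_op_self, op_one]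

lemma op_le_op {a b c d : A} (h₁ : le a b) (h₂ : le c d) : le (op a c) (op b d) := by
  have h₃ := op_le_op_right h₂ b
  rw [op_comm d, op_comm c] at h₃
  exact (op_le_op_right h₁ c).trans h₃

lemma neg_le_neg {a b : A} (h : le a b) : le (neg b) (neg a) := by
  obtain ⟨p, rfl⟩ := exists_op_eq_of_le h
  rw [le, neg_neg, op_assoc, op_neg_self, op_one]

lemma sinf_eq_neg_ssup (a b : A) : sinf a b = neg (ssup (neg a) (neg b)) := by
  simp only [sinf, ssup, odot, neg_neg]

lemma sinf_comm (a b : A) : sinf a b = sinf b a := by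
  rw [sinf_eq_neg_ssup, sinf_eq_neg_ssup, ssup_comm]

lemma leInf_iff_le {a b : A} : leInf a b ↔ le a b := by
  refine ⟨fun h => h ▸ odot_le_right _ _, fun h => ?_⟩
  rw [leInf, sinf_eq_neg_ssup, ssup_comm, ssup_eq_of_le (neg_le_neg h), neg_neg]

lemma nsm_one (x : A) : nsm 1 x = x := op_zero x

lemma nsm_add (m n : ℕ) (x : A) : nsm (m + n) x = op (nsm m x) (nsm n x) := by
  induction m with
  | zero => rw [Nat.zero_add, nsm, zero_op]
  | succ k ih => rw [Nat.succ_add, nsm, ih, nsm, op_assoc]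

lemma nsm_le_nsm {m n : ℕ} (h : m ≤ n) (x : A) : le (nsm m x) (nsm n x) := by
  obtain ⟨k, rfl⟩ := Nat.exists_eq_add_of_le h
  rw [nsm_add]
  exact le_op_left _ _

lemma le_nsm {n : ℕ} (h : 1 ≤ n) (x : A) : le x (nsm n x) := by
  simpa only [nsm_one] using nsm_le_nsm h x

lemma le_neg_iff_sq_eq_zero {x : A} : le x (neg x) ↔ sq x = zero := by
  rw [le_iff_odot_neg_eq_zero, neg_neg, sq]

lemma sq_le_self (x : A) : le (sq x) x := odot_le_left x x

lemma op_sinf_neg_self (x : A) : op (sinf x (neg x)) x = op x x := by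
  rw [sinf, neg_neg, ← ssup, ssup_comm, ssup_eq_of_le (le_op_left x x)]

lemma op_sinf_neg_sq (x : A) : op (sinf (neg x) x) (sq x) = x := by
  rw [sinf, ← neg_odot, ← sq, odot_comm, ← ssup, ssup_comm, ssup_eq_of_le (sq_le_self x)]

lemma sq_op_two (x : A) : op (sq x) (op x x) = op x x := by
  conv_lhs => rw [← op_sinf_neg_self x]
  rw [← op_assoc, op_comm (sq x), sinf_comm, op_sinf_neg_sq]

lemma sq_odot_two (x : A) : odot (sq x) (op x x) = sq x := by
  refine (odot_le_left _ _).antisymm ?_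
  have h : odot (sq x) (neg (odot (sq x) (op x x))) = sinf (sq x) (neg (op x x)) := by
    rw [neg_odot, sinf_comm, sinf, odot_comm, op_comm (neg (sq x))]
  rw [le_iff_odot_neg_eq_zero, h, sinf, neg_neg, sq_op_two, odot_neg_self]

lemma sq_eq_zero_of_nsm_neg_two_eq_one {x : A} {k : ℕ} (h : nsm k (neg (op x x)) = one) :
    sq x = zero := by
  have absorb : ∀ k : ℕ, odot (sq x) (neg (nsm k (neg (op x x)))) = sq x := by
    intro k
    induction k with
    | zero => exact odot_one _
    | succ k ih =>
      rw [nsm, ← neg_neg (nsm k _), ← odot, ← odot_assoc, sq_odot_two, ih]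
  rw [← absorb k, h, neg_one, odot_zero]

section Chang

variable (chang : ∀ x : A, op (sq x) (sq x) = sq (op x x))
include chang

lemma sq_nsm_two_pow_eq_zero {x : A} (hx : sq x = zero) (j : ℕ) :
    sq (nsm (2 ^ j) x) = zero := by
  induction j with
  | zero => rwa [pow_zero, nsm_one]
  | succ j ih => rw [pow_succ, mul_two, nsm_add, ← chang, ih, op_zero]

lemma nsm_le_neg_of_le_neg {x : A} (hx : le x (neg x)) (n : ℕ) : le (nsm n x) (neg x) := by
  have h₁ : le (nsm n x) (nsm (2 ^ n) x) := nsm_le_nsm Nat.lt_two_pow_self.le x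
  have h₂ : le (nsm (2 ^ n) x) (neg (nsm (2 ^ n) x)) :=
    le_neg_iff_sq_eq_zero.mpr (sq_nsm_two_pow_eq_zero chang (le_neg_iff_sq_eq_zero.mp hx) n)
  exact (h₁.trans h₂).trans (neg_le_neg (le_nsm Nat.one_le_two_pow x))

end Chang

lemma IsIdeal.mem_of_le {I : Set A} (hI : IsIdeal I) {a b : A} (h : le a b) (hb : b ∈ I) :
    a ∈ I :=
  hI.2.1 b hb a (leInf_iff_le.mpr h)

lemma IsIdeal.eq_univ_of_one_mem {I : Set A} (hI : IsIdeal I) (h : (one : A) ∈ I) :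
    I = Set.univ :=
  Set.eq_univ_of_forall fun a => hI.mem_of_le (le_one a) h

lemma isIdeal_singleton_zero : IsIdeal ({zero} : Set A) := by
  refine ⟨rfl, ?_, ?_⟩
  · rintro _ rfl y hy
    exact eq_zero_of_le_zero (leInf_iff_le.mp hy)
  · rintro _ rfl _ rfl
    exact op_zero zero

/-- The ideal generated by `I` and `x`, when `I` is an ideal. -/
def adjoin (I : Set A) (x : A) : Set A := {a | ∃ m ∈ I, ∃ n : ℕ, le a (op m (nsm n x))}

lemma subset_adjoin (I : Set A) (x : A) : I ⊆ adjoin I x :=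
  fun a ha => ⟨a, ha, 0, by rw [nsm, op_zero]; exact le.refl a⟩

lemma IsIdeal.mem_adjoin_self {I : Set A} (hI : IsIdeal I) (x : A) : x ∈ adjoin I x :=
  ⟨zero, hI.1, 1, by rw [nsm_one, zero_op]; exact le.refl x⟩

lemma IsIdeal.adjoin {I : Set A} (hI : IsIdeal I) (x : A) : IsIdeal (adjoin I x) := by
  refine ⟨subset_adjoin I x hI.1, ?_, ?_⟩
  · rintro b ⟨m, hm, n, hb⟩ y hy
    exact ⟨m, hm, n, (leInf_iff_le.mp hy).trans hb⟩
  · rintro a ⟨m₁, hm₁, n₁, ha⟩ b ⟨m₂, hm₂, n₂, hb⟩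
    refine ⟨op m₁ m₂, hI.2.2 m₁ hm₁ m₂ hm₂, n₁ + n₂, ?_⟩
    rw [nsm_add, show op (op m₁ m₂) (op (nsm n₁ x) (nsm n₂ x))
      = op (op m₁ (nsm n₁ x)) (op m₂ (nsm n₂ x)) by ac_rfl]
    exact op_le_op ha hb

lemma exists_isMaximalIdeal_superset {I : Set A} (hI : IsIdeal I) (hone : (one : A) ∉ I) :
    ∃ M : Set A, IsMaximalIdeal M ∧ I ⊆ M := by
  let S : Set (Set A) := {J | IsIdeal J ∧ (one : A) ∉ J}
  have chain_ub : ∀ c ⊆ S, IsChain (· ⊆ ·) c → c.Nonempty → ∃ ub ∈ S, ∀ s ∈ c, s ⊆ ub := by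
    rintro c hcS hchain ⟨J₀, hJ₀⟩
    refine ⟨⋃₀ c, ⟨⟨⟨J₀, hJ₀, (hcS hJ₀).1.1⟩, ?_, ?_⟩, ?_⟩, fun s => Set.subset_sUnion_of_mem⟩
    · rintro b ⟨J, hJ, hbJ⟩ y hy
      exact ⟨J, hJ, (hcS hJ).1.2.1 b hbJ y hy⟩
    · rintro a ⟨J₁, hJ₁, haJ⟩ b ⟨J₂, hJ₂, hbJ⟩
      rcases hchain.total hJ₁ hJ₂ with h | h
      · exact ⟨J₂, hJ₂, (hcS hJ₂).1.2.2 a (h haJ) b hbJ⟩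
      · exact ⟨J₁, hJ₁, (hcS hJ₁).1.2.2 a haJ b (h hbJ)⟩
    · rintro ⟨J, hJ, h₁⟩
      exact (hcS hJ).2 h₁
  obtain ⟨M, hIM, hM⟩ := zorn_subset_nonempty S chain_ub I ⟨hI, hone⟩
  obtain ⟨hMideal, hMone⟩ := hM.prop
  refine ⟨M, ⟨hMideal, fun h => hMone (h ▸ trivial), fun J hJ hJuniv hMJ => ?_⟩, hIM⟩
  have hJS : J ∈ S := ⟨hJ, fun h₁ => hJuniv (hJ.eq_univ_of_one_mem h₁)⟩
  exact (hM.2 hJS hMJ).antisymm hMJ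

lemma IsMaximalIdeal.mem_of_forall_nsm_le_neg {M : Set A} (hM : IsMaximalIdeal M) {x : A}
    (hx : ∀ n, le (nsm n x) (neg x)) : x ∈ M := by
  by_cases hJ : adjoin M x = Set.univ
  · obtain ⟨m, hm, n, hle⟩ : (one : A) ∈ adjoin M x := hJ ▸ trivial
    have hnm : le (neg (nsm n x)) m := by
      rw [le, neg_neg, op_comm]
      exact (le_one _).antisymm hle
    have hxn : le x (neg (nsm n x)) := by simpa only [neg_neg] using neg_le_neg (hx n)
    exact hM.1.mem_of_le (hxn.trans hnm) hm
  · rw [← hM.2.2 _ (hM.1.adjoin x) hJ (subset_adjoin M x)]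
    exact hM.1.mem_adjoin_self x

lemma exists_isMaximalIdeal_not_mem {x : A} (hx : sq x ≠ zero) :
    ∃ M : Set A, IsMaximalIdeal M ∧ x ∉ M := by
  let g : A := neg (op x x)
  have hone : (one : A) ∉ adjoin {zero} g := by
    rintro ⟨_, rfl, k, hk⟩
    rw [zero_op] at hk
    exact hx (sq_eq_zero_of_nsm_neg_two_eq_one ((le_one _).antisymm hk))
  obtain ⟨M, hM, hgM⟩ := exists_isMaximalIdeal_superset (isIdeal_singleton_zero.adjoin g) hone
  refine ⟨M, hM, fun hxM => hM.2.1 (hM.1.eq_univ_of_one_mem ?_)⟩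
  rw [← op_neg_self (op x x)]
  exact hM.1.2.2 _ (hM.1.2.2 x hxM x hxM) g (hgM (isIdeal_singleton_zero.mem_adjoin_self g))

end MV

open MV in
/-- In an MV-algebra satisfying `2x² = (2x)²`: if `x ≤ ¬x` then `nx ≤ ¬x` for all `n`;
hence the radical equals `{x : x ≤ ¬x}`. -/
theorem chang_radical_eq {A : Type*} [MV A]
    (chang : ∀ x : A, op (sq x) (sq x) = sq (op x x)) :
    (∀ x : A, leInf x (neg x) → ∀ n : ℕ, leInf (nsm n x) (neg x)) ∧
    rad A = {x : A | leInf x (neg x)} := by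
  simp only [leInf_iff_le]
  refine ⟨fun x hx n => nsm_le_neg_of_le_neg chang hx n, Set.ext fun x => ⟨fun hx => ?_, fun hx => ?_⟩⟩
  · by_contra h
    obtain ⟨M, hM, hxM⟩ := exists_isMaximalIdeal_not_mem (mt le_neg_iff_sq_eq_zero.mpr h)
    exact hxM (Set.mem_sInter.mp hx M hM)
  · exact Set.mem_sInter.mpr fun M hM => hM.mem_of_forall_nsm_le_neg (nsm_le_neg_of_le_neg chang hx)
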